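/- Let H be the layered auxiliary graph constructed from G with delay bound D, and let S_H be its terminal set. Then the minimum cost of an r-rooted directed Steiner tree spanning S_H in H equals the minimum cost of a Steiner tree of G spanning S in which the delay from r to every terminal is at most D; in particular, one such tree exists in H if and only if one exists in G (Theorem 2 of the paper, combining both directions). -/

import Mathlib

/-!
Common framework.

A directed graph on a type `α` is given by a finite set of directed edges
`Finset (α × α)`.  A directed Steiner tree (arborescence) rooted at `r`
spanning a terminal set `T` is a finite edge set `R` such that no edge enters
the root, every vertex has in-degree at most one, the tail of every edge is
reachable from `r` inside `R` (hence every vertex of `R` is reachable from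
`r` by a unique directed path), and every terminal of `T` is reachable
from `r` in `R`.
-/

/-- `b` is reachable from `a` using the directed edges of `R`. -/
def Reaches {α : Type*} (R : Finset (α × α)) (a b : α) : Prop :=
  Relation.ReflTransGen (fun x y => (x, y) ∈ R) a b

/-- `R` is a directed Steiner tree rooted at `r` spanning the terminal set `T`. -/
def IsDirSteinerTree {α : Type*} [DecidableEq α] (R : Finset (α × α)) (r : α)
    (T : Finset α) : Prop :=
  (∀ e ∈ R, e.2 ≠ r) ∧
  (∀ v : α, (R.filter fun e => e.2 = v).card ≤ 1) ∧
  (∀ e ∈ R, Reaches R r e.1) ∧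
  (∀ t ∈ T, Reaches R r t)

/-- The total cost of the edge set `R` under the edge-cost function `c`. -/
def treeCost {α : Type*} (c : α × α → ℕ) (R : Finset (α × α)) : ℕ :=
  ∑ e ∈ R, c e

/-- `x` is a vertex of the edge set `R` (an endpoint of some edge of `R`). -/
def MemVerts {α : Type*} (R : Finset (α × α)) (x : α) : Prop :=
  ∃ e ∈ R, e.1 = x ∨ e.2 = x

/-- `R` is a minimum-cost directed Steiner tree rooted at `r` spanning `T`
inside the directed graph with edge set `Edges`, w.r.t. the cost `c`. -/
def IsMinDirSteinerTree {α : Type*} [DecidableEq α] (c : α × α → ℕ)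
    (Edges R : Finset (α × α)) (r : α) (T : Finset α) : Prop :=
  R ⊆ Edges ∧ IsDirSteinerTree R r T ∧
    ∀ R' ⊆ Edges, IsDirSteinerTree R' r T → treeCost c R ≤ treeCost c R'

/-- `b` is reachable from `a` in `R` by a directed path of total delay
exactly `k` (delays given by `d`). -/
def DelayReaches {α : Type*} (R : Finset (α × α)) (d : α × α → ℕ)
    (a b : α) (k : ℕ) : Prop :=
  Relation.ReflTransGen
    (fun p q : α × ℕ => (p.1, q.1) ∈ R ∧ q.2 = p.2 + d (p.1, q.1))
    (a, 0) (b, k)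

/-- Vertices of the layered auxiliary graph `H` built from a graph on `V`:
`Sum.inl r` is the root, `Sum.inl v` (for a terminal `v ≠ r`) is the extra
terminal copy of `v`, and `Sum.inr (v, i)` is the layer copy `v^i`
(meaningful for `1 ≤ i ≤ D`). -/
abbrev AuxV (V : Type*) := V ⊕ (V × ℕ)

/-- The edge set of the layered auxiliary graph `H`:
* for every edge `e = (v_j, v_l) ∈ E` not incident to the root `r` and every
  layer `i` with `1 ≤ i` and `i + d e ≤ D`, a directed edge
  `(v_j^i, v_l^{i+d e})`;
* for every edge `(r, v_l) ∈ E` (with `d e ≤ D`), a directed edge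
  `(r, v_l^{d e})`;
* for every terminal `v ∈ S \ {r}` and every `1 ≤ i ≤ D`, a directed edge
  `(v^i, v)` into the extra terminal copy of `v`. -/
def auxEdges {V : Type*} [DecidableEq V] (E : Finset (V × V)) (d : V × V → ℕ)
    (S : Finset V) (r : V) (D : ℕ) : Finset (AuxV V × AuxV V) :=
  (((E.filter fun e => e.1 ≠ r ∧ e.2 ≠ r) ×ˢ Finset.Icc 1 D).filter
      fun p => p.2 + d p.1 ≤ D).image
    (fun p => (Sum.inr (p.1.1, p.2), Sum.inr (p.1.2, p.2 + d p.1)))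
  ∪ (E.filter fun e => e.1 = r ∧ e.2 ≠ r ∧ d e ≤ D).image
      (fun e => (Sum.inl r, Sum.inr (e.2, d e)))
  ∪ ((S.erase r) ×ˢ Finset.Icc 1 D).image
      (fun p => (Sum.inr (p.1, p.2), Sum.inl p.1))

/-- Costs of the edges of the auxiliary graph: an edge between copies of `a`
and `b` inherits the cost `c (a, b)` of the underlying edge of `G`; the
edges into the extra terminal copies have cost `0`. -/
def auxCost {V : Type*} (c : V × V → ℕ) : AuxV V × AuxV V → ℕ
  | (Sum.inr (a, _), Sum.inr (b, _)) => c (a, b)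
  | (Sum.inl a, Sum.inr (b, _)) => c (a, b)
  | _ => 0

/-- The terminal set `S_H` of the auxiliary graph: the root `Sum.inl r`
together with the extra terminal copies `Sum.inl v`, `v ∈ S \ {r}`;
i.e. the image of `S` under `Sum.inl`. -/
def auxTerminals {V : Type*} [DecidableEq V] (S : Finset V) : Finset (AuxV V) :=
  S.image Sum.inl

/-- The projection of an edge set `R` of the auxiliary graph back to `G`:
the set of all edges `(v_j, v_l)` of `G` some copy of which belongs to `R`. -/
def projTree {V : Type*} [DecidableEq V] (R : Finset (AuxV V × AuxV V)) :
    Finset (V × V) :=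
  R.biUnion fun p =>
    match p with
    | (Sum.inr (a, _), Sum.inr (b, _)) => {(a, b)}
    | (Sum.inl a, Sum.inr (b, _)) => {(a, b)}
    | _ => ∅

/-!
A delay-bounded tree `R'` of `G` lifts to `H` by placing every vertex `v` in the layer of its
delay, which is well defined because paths in an arborescence are unique, and by dropping the
edges that would leave layer `D`; the extra terminal copies are attached by cost-0 edges.
Conversely, a tree of `H` projects to a delay-bounded tree of `G` once every vertex keeps only
the edge entering its earliest reached copy. Neither construction increases the cost, so each
set of costs is dominated by the other and the two infima agree.
-/

open Finset Relation

lemma Nat.sInf_eq_and_nonempty_iff_of_forall_exists_le {A B : Set ℕ}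
    (hAB : ∀ a ∈ A, ∃ b ∈ B, b ≤ a) (hBA : ∀ b ∈ B, ∃ a ∈ A, a ≤ b) :
    sInf A = sInf B ∧ (A.Nonempty ↔ B.Nonempty) := by
  have hne : A.Nonempty ↔ B.Nonempty :=
    ⟨fun ⟨a, ha⟩ => (hAB a ha).imp fun _ h => h.1, fun ⟨b, hb⟩ => (hBA b hb).imp fun _ h => h.1⟩
  refine ⟨?_, hne⟩
  by_cases hA : A.Nonempty
  · obtain ⟨a, ha, hab⟩ := hBA _ (Nat.sInf_mem (hne.1 hA))
    obtain ⟨b, hb, hba⟩ := hAB _ (Nat.sInf_mem hA)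
    exact le_antisymm ((Nat.sInf_le ha).trans hab) ((Nat.sInf_le hb).trans hba)
  · rw [Set.not_nonempty_iff_eq_empty.1 hA, Set.not_nonempty_iff_eq_empty.1 (hne.not.1 hA)]

section Reachability

variable {α : Type*} {R : Finset (α × α)} {d : α × α → ℕ} {a b c : α} {k : ℕ}

def delayStep (R : Finset (α × α)) (d : α × α → ℕ) (p q : α × ℕ) : Prop :=
  (p.1, q.1) ∈ R ∧ q.2 = p.2 + d (p.1, q.1)

lemma DelayReaches.refl : DelayReaches R d a a 0 := ReflTransGen.refl

lemma DelayReaches.tail (h : DelayReaches R d a b k) (hbc : (b, c) ∈ R) :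
    DelayReaches R d a c (k + d (b, c)) :=
  ReflTransGen.tail h ⟨hbc, rfl⟩

lemma DelayReaches.reaches (h : DelayReaches R d a b k) : Reaches R a b :=
  ReflTransGen.lift (p := fun x y => (x, y) ∈ R) Prod.fst (fun _ _ hpq => hpq.1) _ _ h

lemma Reaches.exists_delayReaches (h : Reaches R a b) : ∃ k, DelayReaches R d a b k := by
  induction h with
  | refl => exact ⟨0, .refl⟩
  | tail _ hbc ih =>
    obtain ⟨k, hk⟩ := ih
    exact ⟨_, hk.tail hbc⟩

lemma DelayReaches.pos (hd : ∀ e ∈ R, 0 < d e) (hba : b ≠ a) (h : DelayReaches R d a b k) :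
    0 < k := by
  rcases ReflTransGen.cases_tail h with h | ⟨p, -, hp, hk⟩
  · exact absurd (congrArg Prod.fst h) hba
  · have := hd _ hp
    omega

lemma card_filter_snd_le_one_iff [DecidableEq α] :
    (∀ v, (R.filter fun e => e.2 = v).card ≤ 1) ↔ ∀ e ∈ R, ∀ e' ∈ R, e.2 = e'.2 → e = e' := by
  simp only [card_le_one, mem_filter]
  exact ⟨fun h e he e' he' hee' => h _ e ⟨he, rfl⟩ e' ⟨he', hee'.symm⟩,
    fun h v e he e' he' => h e he.1 e' he'.1 (he.2.trans he'.2.symm)⟩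

lemma IsDirSteinerTree.eq_of_snd_eq [DecidableEq α] {T : Finset α} (hR : IsDirSteinerTree R a T)
    {e e' : α × α} (he : e ∈ R) (he' : e' ∈ R) (hee' : e.2 = e'.2) : e = e' :=
  card_filter_snd_le_one_iff.1 hR.2.1 e he e' he' hee'

/-- In an arborescence every vertex is reached by a single path, hence with a single delay. -/
lemma IsDirSteinerTree.delayReaches_unique [DecidableEq α] {T : Finset α}
    (hR : IsDirSteinerTree R a T) {k' : ℕ} (h : DelayReaches R d a b k)
    (h' : DelayReaches R d a b k') : k = k' := by
  suffices key : ∀ p q : α × ℕ, ReflTransGen (delayStep R d) (a, 0) p →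
      ReflTransGen (delayStep R d) (a, 0) q → p.1 = q.1 → p = q from
    congrArg Prod.snd (key _ _ h h' rfl)
  intro p q hp
  induction hp generalizing q with
  | refl =>
    intro hq hpq
    rcases hq.cases_tail with rfl | ⟨q', -, hq', -⟩
    · rfl
    · exact absurd hpq.symm (hR.1 _ hq')
  | tail _ hp ih =>
    intro hq hpq
    rcases hq.cases_tail with rfl | ⟨q', hq', hstep⟩
    · exact absurd hpq (hR.1 _ hp.1)
    · have hedge := hR.eq_of_snd_eq hp.1 hstep.1 hpq
      obtain rfl := ih q' hq' (Prod.mk.inj hedge).1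
      ext
      · exact hpq
      · rw [hp.2, hstep.2, hpq]

/-- Junk value `0` when `b` is not reachable from `a`. -/
noncomputable def delayFrom (R : Finset (α × α)) (d : α × α → ℕ) (a b : α) : ℕ :=
  sInf {k | DelayReaches R d a b k}

lemma Reaches.delayReaches_delayFrom (h : Reaches R a b) :
    DelayReaches R d a b (delayFrom R d a b) :=
  Nat.sInf_mem h.exists_delayReaches

lemma IsDirSteinerTree.delayFrom_eq [DecidableEq α] {T : Finset α} (hR : IsDirSteinerTree R a T)
    (h : DelayReaches R d a b k) : delayFrom R d a b = k :=
  hR.delayReaches_unique h.reaches.delayReaches_delayFrom h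

lemma IsDirSteinerTree.delayFrom_snd [DecidableEq α] {T : Finset α} (hR : IsDirSteinerTree R a T)
    {e : α × α} (he : e ∈ R) : delayFrom R d a e.2 = delayFrom R d a e.1 + d e :=
  hR.delayFrom_eq ((hR.2.2.1 e he).delayReaches_delayFrom.tail he)

end Reachability

section AuxiliaryGraph

variable {V : Type*}

def auxBase : AuxV V → V := Sum.elim id Prod.fst

@[simp]
lemma auxBase_inl (v : V) : auxBase (Sum.inl v) = v := rfl

@[simp]
lemma auxBase_inr (q : V × ℕ) : auxBase (Sum.inr q) = q.1 := rfl

def auxProj (x : AuxV V × AuxV V) : V × V := (auxBase x.1, auxBase x.2)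

lemma auxCost_of_snd_inr (c : V × V → ℕ) (p : AuxV V) (q : V × ℕ) :
    auxCost c (p, Sum.inr q) = c (auxProj (p, Sum.inr q)) := by
  rcases p with a | ⟨a, i⟩ <;> rfl

lemma auxCost_of_snd_inl (c : V × V → ℕ) (p : AuxV V) (t : V) : auxCost c (p, Sum.inl t) = 0 := by
  rcases p with a | ⟨a, i⟩ <;> rfl

variable [DecidableEq V] {E : Finset (V × V)} {d : V × V → ℕ} {S : Finset V} {r : V} {D : ℕ}

lemma auxEdges_of_snd_inr {p : AuxV V} {v : V} {j : ℕ}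
    (h : (p, Sum.inr (v, j)) ∈ auxEdges E d S r D) :
    (∃ u i, p = Sum.inr (u, i) ∧ (u, v) ∈ E ∧ v ≠ r ∧ j = i + d (u, v) ∧ 1 ≤ i ∧ j ≤ D) ∨
      (p = Sum.inl r ∧ (r, v) ∈ E ∧ v ≠ r ∧ j = d (r, v) ∧ j ≤ D) := by
  simp [auxEdges] at h
  rcases h with ⟨u, i, ⟨⟨⟨huv, -, hv⟩, hi, -⟩, hj⟩, rfl, rfl⟩ | ⟨⟨hrv, hv, hj⟩, rfl, rfl⟩
  · exact Or.inl ⟨u, i, rfl, huv, hv, rfl, hi, hj⟩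
  · exact Or.inr ⟨rfl, hrv, hv, rfl, hj⟩

lemma auxEdges_of_snd_inl {p : AuxV V} {t : V} (h : (p, Sum.inl t) ∈ auxEdges E d S r D) :
    ∃ i ≤ D, p = Sum.inr (t, i) := by
  simp [auxEdges] at h
  obtain ⟨i, ⟨-, -, hi⟩, rfl⟩ := h
  exact ⟨i, hi, rfl⟩

lemma mem_auxEdges_of_layer {u v : V} {i : ℕ} (huv : (u, v) ∈ E) (hu : u ≠ r) (hv : v ≠ r)
    (hi : 1 ≤ i) (hD : i + d (u, v) ≤ D) :
    (Sum.inr (u, i), Sum.inr (v, i + d (u, v))) ∈ auxEdges E d S r D := by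
  simp only [auxEdges, mem_union, mem_image, mem_filter, mem_product, mem_Icc]
  exact Or.inl (Or.inl ⟨((u, v), i), ⟨⟨⟨huv, hu, hv⟩, hi, by omega⟩, hD⟩, rfl⟩)

lemma mem_auxEdges_of_root {v : V} (hrv : (r, v) ∈ E) (hv : v ≠ r) (hD : d (r, v) ≤ D) :
    (Sum.inl r, Sum.inr (v, d (r, v))) ∈ auxEdges E d S r D := by
  simp only [auxEdges, mem_union, mem_image, mem_filter]
  exact Or.inl (Or.inr ⟨(r, v), ⟨hrv, rfl, hv, hD⟩, rfl⟩)

lemma mem_auxEdges_of_terminal {t : V} {i : ℕ} (ht : t ∈ S) (htr : t ≠ r) (hi : 1 ≤ i)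
    (hD : i ≤ D) : (Sum.inr (t, i), Sum.inl t) ∈ auxEdges E d S r D := by
  simp only [auxEdges, mem_union, mem_image, mem_product, mem_erase, mem_Icc]
  exact Or.inr ⟨(t, i), ⟨⟨htr, ht⟩, hi, hD⟩, rfl⟩

end AuxiliaryGraph

section FirstLayerTree

variable {V : Type*} [DecidableEq V] {E : Finset (V × V)} {d : V × V → ℕ} {S : Finset V}
  {r : V} {D : ℕ} {R : Finset (AuxV V × AuxV V)}

noncomputable def firstLayer (R : Finset (AuxV V × AuxV V)) (r v : V) : ℕ :=
  sInf {i | Reaches R (Sum.inl r) (Sum.inr (v, i))}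

/-- The edges of `R` whose head is the earliest reached copy of its vertex. -/
noncomputable def firstLayerEdges (R : Finset (AuxV V × AuxV V)) (r : V) :
    Finset (AuxV V × AuxV V) :=
  R.filter fun x => x.2 = Sum.inr (auxBase x.2, firstLayer R r (auxBase x.2))

noncomputable def firstLayerTree (R : Finset (AuxV V × AuxV V)) (r : V) : Finset (V × V) :=
  (firstLayerEdges R r).image auxProj

lemma mem_firstLayerTree {p : AuxV V} {v : V} (h : (p, Sum.inr (v, firstLayer R r v)) ∈ R) :
    (auxBase p, v) ∈ firstLayerTree R r :=
  mem_image.2 ⟨_, mem_filter.2 ⟨h, by simp⟩, by simp [auxProj]⟩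

lemma exists_of_mem_firstLayerTree {u v : V} (h : (u, v) ∈ firstLayerTree R r) :
    ∃ p, (p, Sum.inr (v, firstLayer R r v)) ∈ R ∧ auxBase p = u := by
  obtain ⟨⟨p, q⟩, hx, hpq⟩ := mem_image.1 h
  obtain ⟨hx, hq⟩ := mem_filter.1 hx
  obtain ⟨rfl, rfl⟩ := Prod.mk.inj hpq
  exact ⟨p, hq ▸ hx, rfl⟩

/-- The edge into the earliest copy `v^L` of `v` comes from the root or from a copy `u^i` with
`i < L ≤ n`. -/
lemma exists_delayReaches_firstLayerTree_le (hRH : R ⊆ auxEdges E d S r D)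
    (hd : ∀ e ∈ E, 0 < d e) {v : V} {n : ℕ} (h : Reaches R (Sum.inl r) (Sum.inr (v, n))) :
    ∃ m ≤ n, DelayReaches (firstLayerTree R r) d r v m := by
  induction n using Nat.strong_induction_on generalizing v with
  | _ n ih =>
    have hLn : firstLayer R r v ≤ n := Nat.sInf_le h
    have hL : Reaches R (Sum.inl r) (Sum.inr (v, firstLayer R r v)) :=
      Nat.sInf_mem (s := {i | Reaches R _ (Sum.inr (v, i))}) ⟨n, h⟩
    obtain ⟨p, hp, hpv⟩ := hL.cases_tail.resolve_left Sum.inr_ne_inl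
    have hedge := mem_firstLayerTree hpv
    rcases auxEdges_of_snd_inr (hRH hpv) with ⟨u, i, rfl, huv, -, hL, -, -⟩ | ⟨rfl, -, -, hL, -⟩
    · obtain ⟨m, hm, hu⟩ := ih i (by have := hd _ huv; omega) hp
      exact ⟨m + d (u, v), by omega, hu.tail hedge⟩
    · exact ⟨0 + d (r, v), by omega, DelayReaches.refl.tail hedge⟩

lemma reaches_firstLayerTree_auxBase (hRH : R ⊆ auxEdges E d S r D) (hd : ∀ e ∈ E, 0 < d e)
    {p : AuxV V} {q : V × ℕ} (hpq : (p, Sum.inr q) ∈ R) (hp : Reaches R (Sum.inl r) p) :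
    Reaches (firstLayerTree R r) r (auxBase p) := by
  rcases auxEdges_of_snd_inr (hRH hpq) with ⟨u, i, rfl, -⟩ | ⟨rfl, -⟩
  · obtain ⟨m, -, hu⟩ := exists_delayReaches_firstLayerTree_le hRH hd hp
    exact hu.reaches
  · exact .refl

lemma exists_delayReaches_firstLayerTree_of_reaches_inl (hRH : R ⊆ auxEdges E d S r D)
    (hd : ∀ e ∈ E, 0 < d e) {t : V} (ht : Reaches R (Sum.inl r) (Sum.inl t)) :
    ∃ k ≤ D, DelayReaches (firstLayerTree R r) d r t k := by
  rcases ht.cases_tail with htr | ⟨p, hp, hpt⟩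
  · rw [Sum.inl_injective htr]
    exact ⟨0, D.zero_le, .refl⟩
  · obtain ⟨i, hiD, rfl⟩ := auxEdges_of_snd_inl (hRH hpt)
    obtain ⟨m, hmi, ht⟩ := exists_delayReaches_firstLayerTree_le hRH hd hp
    exact ⟨m, hmi.trans hiD, ht⟩

lemma firstLayerTree_subset (hRH : R ⊆ auxEdges E d S r D) : firstLayerTree R r ⊆ E := by
  rintro ⟨u, v⟩ he
  obtain ⟨p, hp, rfl⟩ := exists_of_mem_firstLayerTree he
  rcases auxEdges_of_snd_inr (hRH hp) with ⟨u, i, rfl, hE, -⟩ | ⟨rfl, hE, -⟩ <;> exact hE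

lemma isDirSteinerTree_firstLayerTree (hRH : R ⊆ auxEdges E d S r D) (hd : ∀ e ∈ E, 0 < d e)
    (hR : IsDirSteinerTree R (Sum.inl r) (auxTerminals S)) :
    IsDirSteinerTree (firstLayerTree R r) r S := by
  refine ⟨fun ⟨u, v⟩ he => ?_, card_filter_snd_le_one_iff.2 fun ⟨u, v⟩ he ⟨u', v'⟩ he' hvv' => ?_,
    fun ⟨u, v⟩ he => ?_, fun t ht => ?_⟩
  · obtain ⟨p, hp, -⟩ := exists_of_mem_firstLayerTree he
    rcases auxEdges_of_snd_inr (hRH hp) with ⟨-, -, -, -, hne, -⟩ | ⟨-, -, hne, -⟩ <;> exact hne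
  · obtain ⟨p, hp, rfl⟩ := exists_of_mem_firstLayerTree he
    obtain ⟨p', hp', rfl⟩ := exists_of_mem_firstLayerTree he'
    obtain rfl : v = v' := hvv'
    obtain rfl : p = p' := (Prod.mk.inj (hR.eq_of_snd_eq hp hp' rfl)).1
    rfl
  · obtain ⟨p, hp, rfl⟩ := exists_of_mem_firstLayerTree he
    exact reaches_firstLayerTree_auxBase hRH hd hp (hR.2.2.1 _ hp)
  · obtain ⟨k, -, hk⟩ := exists_delayReaches_firstLayerTree_of_reaches_inl hRH hd
      (hR.2.2.2 _ (mem_image_of_mem Sum.inl ht))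
    exact hk.reaches

lemma treeCost_firstLayerTree_le (c : V × V → ℕ) :
    treeCost c (firstLayerTree R r) ≤ treeCost (auxCost c) R := by
  calc treeCost c (firstLayerTree R r)
      ≤ ∑ x ∈ firstLayerEdges R r, c (auxProj x) :=
        sum_image_le_of_nonneg fun _ _ => Nat.zero_le _
    _ = treeCost (auxCost c) (firstLayerEdges R r) := by
        refine sum_congr rfl fun x hx => ?_
        rw [← Prod.mk.eta (p := x), (mem_filter.1 hx).2, auxCost_of_snd_inr]
    _ ≤ treeCost (auxCost c) R := sum_le_sum_of_subset (filter_subset _ _)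

end FirstLayerTree

section LayeredTree

variable {V : Type*} [DecidableEq V] {E R' : Finset (V × V)} {d : V × V → ℕ} {S : Finset V}
  {r : V} {D : ℕ}

noncomputable def layerCopy (R' : Finset (V × V)) (d : V × V → ℕ) (r u : V) : AuxV V :=
  if u = r then Sum.inl r else Sum.inr (u, delayFrom R' d r u)

noncomputable def layeredTree (R' : Finset (V × V)) (d : V × V → ℕ) (S : Finset V) (r : V)
    (D : ℕ) : Finset (AuxV V × AuxV V) :=
  (R'.filter fun e => delayFrom R' d r e.2 ≤ D).image
      (fun e => (layerCopy R' d r e.1, layerCopy R' d r e.2)) ∪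
    (S.erase r).image fun t => (layerCopy R' d r t, Sum.inl t)

lemma layerCopy_self : layerCopy R' d r r = Sum.inl r := if_pos rfl

lemma layerCopy_of_ne {u : V} (hu : u ≠ r) :
    layerCopy R' d r u = Sum.inr (u, delayFrom R' d r u) :=
  if_neg hu

@[simp]
lemma auxBase_layerCopy (u : V) : auxBase (layerCopy R' d r u) = u := by
  unfold layerCopy
  split_ifs with h <;> simp [h]

lemma mem_layeredTree {x : AuxV V × AuxV V} :
    x ∈ layeredTree R' d S r D ↔
      (∃ u v, (u, v) ∈ R' ∧ delayFrom R' d r v ≤ D ∧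
          x = (layerCopy R' d r u, layerCopy R' d r v)) ∨
        ∃ t ∈ S, t ≠ r ∧ x = (layerCopy R' d r t, Sum.inl t) := by
  simp only [layeredTree, mem_union, mem_image, mem_filter, mem_erase, Prod.exists]
  grind

lemma reaches_layerCopy (hR' : IsDirSteinerTree R' r S) {v : V} {k : ℕ}
    (h : DelayReaches R' d r v k) (hk : k ≤ D) :
    Reaches (layeredTree R' d S r D) (Sum.inl r) (layerCopy R' d r v) := by
  suffices key : ∀ q : V × ℕ, ReflTransGen (delayStep R' d) (r, 0) q → q.2 ≤ D →
      Reaches (layeredTree R' d S r D) (Sum.inl r) (layerCopy R' d r q.1) from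
    key (v, k) h hk
  intro q hq
  induction hq with
  | refl => exact fun _ => layerCopy_self (R' := R') (d := d) ▸ .refl
  | @tail p q hp hpq ih =>
    intro hqD
    have hq : delayFrom R' d r q.1 = q.2 := by
      rw [hpq.2]
      exact hR'.delayFrom_eq (DelayReaches.tail hp hpq.1)
    exact (ih (by rw [hpq.2] at hqD; omega)).tail
      (mem_layeredTree.2 (Or.inl ⟨p.1, q.1, hpq.1, hq ▸ hqD, rfl⟩))

lemma layeredTree_subset (hR'E : R' ⊆ E) (hd : ∀ e ∈ E, 0 < d e)
    (hR' : IsDirSteinerTree R' r S) (hdel : ∀ t ∈ S, ∃ k ≤ D, DelayReaches R' d r t k) :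
    layeredTree R' d S r D ⊆ auxEdges E d S r D := by
  have hpos {u : V} (hu : u ≠ r) (h : Reaches R' r u) : 1 ≤ delayFrom R' d r u :=
    h.delayReaches_delayFrom.pos (fun e he => hd e (hR'E he)) hu
  intro x hx
  rcases mem_layeredTree.1 hx with ⟨u, v, huv, hvD, rfl⟩ | ⟨t, ht, htr, rfl⟩
  · have hv : v ≠ r := hR'.1 _ huv
    have hdelay : delayFrom R' d r v = delayFrom R' d r u + d (u, v) := hR'.delayFrom_snd huv
    rw [layerCopy_of_ne hv, hdelay]
    by_cases hu : u = r
    · subst hu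
      rw [layerCopy_self, hR'.delayFrom_eq .refl, zero_add]
      exact mem_auxEdges_of_root (hR'E huv) hv (by omega)
    · rw [layerCopy_of_ne hu]
      exact mem_auxEdges_of_layer (hR'E huv) hu hv (hpos hu (hR'.2.2.1 _ huv)) (by omega)
  · obtain ⟨k, hkD, hk⟩ := hdel t ht
    rw [layerCopy_of_ne htr]
    exact mem_auxEdges_of_terminal ht htr (hpos htr hk.reaches) (hR'.delayFrom_eq hk ▸ hkD)

lemma isDirSteinerTree_layeredTree (hR' : IsDirSteinerTree R' r S)
    (hdel : ∀ t ∈ S, ∃ k ≤ D, DelayReaches R' d r t k) :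
    IsDirSteinerTree (layeredTree R' d S r D) (Sum.inl r) (auxTerminals S) := by
  have hterminal {t : V} (ht : t ∈ S) :
      Reaches (layeredTree R' d S r D) (Sum.inl r) (layerCopy R' d r t) := by
    obtain ⟨k, hkD, hk⟩ := hdel t ht
    exact reaches_layerCopy hR' hk hkD
  refine ⟨fun x hx => ?_, card_filter_snd_le_one_iff.2 fun x hx x' hx' hxx' => ?_,
    fun x hx => ?_, fun t ht => ?_⟩
  · rcases mem_layeredTree.1 hx with ⟨u, v, huv, -, rfl⟩ | ⟨t, -, htr, rfl⟩
    · simp [layerCopy_of_ne (hR'.1 _ huv)]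
    · simpa using htr
  · rcases mem_layeredTree.1 hx with ⟨u, v, huv, -, rfl⟩ | ⟨t, -, htr, rfl⟩ <;>
      rcases mem_layeredTree.1 hx' with ⟨u', v', huv', -, rfl⟩ | ⟨t', -, htr', rfl⟩
    · have hvv' : v = v' := by simpa only [auxBase_layerCopy] using congrArg auxBase hxx'
      obtain ⟨rfl, rfl⟩ := Prod.mk.inj (hR'.eq_of_snd_eq huv huv' hvv')
      rfl
    · simp [layerCopy_of_ne (hR'.1 _ huv)] at hxx'
    · simp [layerCopy_of_ne (hR'.1 _ huv')] at hxx'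
    · obtain rfl : t = t' := Sum.inl_injective hxx'
      rfl
  · rcases mem_layeredTree.1 hx with ⟨u, v, huv, hvD, rfl⟩ | ⟨t, ht, -, rfl⟩
    · have hu : DelayReaches R' d r u (delayFrom R' d r u) :=
        (hR'.2.2.1 _ huv).delayReaches_delayFrom
      have hdelay : delayFrom R' d r v = delayFrom R' d r u + d (u, v) := hR'.delayFrom_snd huv
      exact reaches_layerCopy hR' hu (by omega)
    · exact hterminal ht
  · obtain ⟨t, hS, rfl⟩ := mem_image.1 ht
    by_cases htr : t = r
    · rw [htr]
      exact .refl
    · exact (hterminal hS).tail (mem_layeredTree.2 (Or.inr ⟨t, hS, htr, rfl⟩))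

lemma treeCost_layeredTree_le (c : V × V → ℕ) (hR' : IsDirSteinerTree R' r S) :
    treeCost (auxCost c) (layeredTree R' d S r D) ≤ treeCost c R' := by
  calc treeCost (auxCost c) (layeredTree R' d S r D)
      = ∑ x ∈ (R'.filter fun e => delayFrom R' d r e.2 ≤ D).image
          (fun e => (layerCopy R' d r e.1, layerCopy R' d r e.2)), auxCost c x := by
        refine sum_union_eq_left fun x hx _ => ?_
        obtain ⟨t, -, rfl⟩ := mem_image.1 hx
        exact auxCost_of_snd_inl c _ t
    _ ≤ ∑ e ∈ R'.filter fun e => delayFrom R' d r e.2 ≤ D,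
          auxCost c (layerCopy R' d r e.1, layerCopy R' d r e.2) :=
        sum_image_le_of_nonneg fun _ _ => Nat.zero_le _
    _ = ∑ e ∈ R'.filter fun e => delayFrom R' d r e.2 ≤ D, c e := by
        refine sum_congr rfl fun e he => ?_
        rw [layerCopy_of_ne (hR'.1 _ (mem_filter.1 he).1), auxCost_of_snd_inr]
        simp [auxProj]
    _ ≤ treeCost c R' := sum_le_sum_of_subset (filter_subset _ _)

end LayeredTree

theorem aux_steiner_tree_min_cost_eq_general
    {V : Type*} [DecidableEq V]
    (E : Finset (V × V)) (S : Finset V) (r : V)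
    (c : V × V → ℕ) (d : V × V → ℕ)
    (hd : ∀ e ∈ E, 0 < d e)
    (D : ℕ) :
    sInf {C : ℕ | ∃ R ⊆ auxEdges E d S r D,
        IsDirSteinerTree R (Sum.inl r) (auxTerminals S) ∧
        treeCost (auxCost c) R = C}
      = sInf {C : ℕ | ∃ R' ⊆ E, IsDirSteinerTree R' r S ∧
          (∀ t ∈ S, ∃ k ≤ D, DelayReaches R' d r t k) ∧
          treeCost c R' = C} ∧
    ({C : ℕ | ∃ R ⊆ auxEdges E d S r D,
        IsDirSteinerTree R (Sum.inl r) (auxTerminals S) ∧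
        treeCost (auxCost c) R = C}.Nonempty
      ↔ {C : ℕ | ∃ R' ⊆ E, IsDirSteinerTree R' r S ∧
          (∀ t ∈ S, ∃ k ≤ D, DelayReaches R' d r t k) ∧
          treeCost c R' = C}.Nonempty) := by
  refine Nat.sInf_eq_and_nonempty_iff_of_forall_exists_le ?_ ?_
  · rintro _ ⟨R, hRH, hR, rfl⟩
    refine ⟨_, ⟨firstLayerTree R r, firstLayerTree_subset hRH,
      isDirSteinerTree_firstLayerTree hRH hd hR, fun t ht => ?_, rfl⟩, treeCost_firstLayerTree_le c⟩
    exact exists_delayReaches_firstLayerTree_of_reaches_inl hRH hd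
      (hR.2.2.2 _ (mem_image_of_mem _ ht))
  · rintro _ ⟨R', hR'E, hR', hdel, rfl⟩
    exact ⟨_, ⟨layeredTree R' d S r D, layeredTree_subset hR'E hd hR' hdel,
      isDirSteinerTree_layeredTree hR' hdel, rfl⟩, treeCost_layeredTree_le c hR'⟩

/-- Theorem 2 of the paper, both directions combined.
The minimum cost of an `r`-rooted directed Steiner tree spanning `S_H` in
the layered auxiliary graph `H` equals the minimum cost of a Steiner tree
of `G` rooted at `r` spanning `S` in which the delay from `r` to every
terminal is at most `D`; in particular such a tree exists in `H` iff one
exists in `G`. -/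
theorem aux_steiner_tree_min_cost_eq
    {V : Type*} [Fintype V] [DecidableEq V]
    (E : Finset (V × V)) (S : Finset V) (r : V) (hr : r ∈ S)
    (c : V × V → ℕ) (d : V × V → ℕ)
    (hc : ∀ e ∈ E, 0 < c e) (hd : ∀ e ∈ E, 0 < d e)
    (D : ℕ) (hD : 0 < D) :
    sInf {C : ℕ | ∃ R ⊆ auxEdges E d S r D,
        IsDirSteinerTree R (Sum.inl r) (auxTerminals S) ∧
        treeCost (auxCost c) R = C}
      = sInf {C : ℕ | ∃ R' ⊆ E, IsDirSteinerTree R' r S ∧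
          (∀ t ∈ S, ∃ k ≤ D, DelayReaches R' d r t k) ∧
          treeCost c R' = C} ∧
    ({C : ℕ | ∃ R ⊆ auxEdges E d S r D,
        IsDirSteinerTree R (Sum.inl r) (auxTerminals S) ∧
        treeCost (auxCost c) R = C}.Nonempty
      ↔ {C : ℕ | ∃ R' ⊆ E, IsDirSteinerTree R' r S ∧
          (∀ t ∈ S, ∃ k ≤ D, DelayReaches R' d r t k) ∧
          treeCost c R' = C}.Nonempty) :=
  aux_steiner_tree_min_cost_eq_general E S r c d hd D
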